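/- Let f and D be natural numbers, Q a finite set with |Q| = 2f + 1, B ⊆ Q with |B| ≤ f, and suppose the family of D-element subsets of Q is nonempty (i.e., D ≤ 2f + 1). Under the uniform probability distribution on the D-element subsets of Q, the probability of the event that the chosen subset is contained in B is at most (1/2)^D. -/

import Mathlib

/-! The probability equals `C(|B|, D) / C(2f + 1, D)`. Comparing falling factorials factor by
factor, `2 (n - i) ≤ 2n - i`, gives `2^D C(n, D) ≤ C(2n, D) ≤ C(2f + 1, D)` for `n = |B| ≤ f`. -/

open Finset

namespace Nat

theorem pow_mul_descFactorial_le_descFactorial_mul (c n : ℕ) :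
    ∀ k, c ^ k * n.descFactorial k ≤ (c * n).descFactorial k
  | 0 => by simp
  | k + 1 => by
    have step : c * (n - k) ≤ c * n - k := by
      rcases c.eq_zero_or_pos with rfl | hc
      · simp
      · have : k ≤ c * k := Nat.le_mul_of_pos_left k hc
        rw [Nat.mul_sub]
        omega
    rw [descFactorial_succ, descFactorial_succ, pow_succ]
    calc c ^ k * c * ((n - k) * n.descFactorial k)
        = c * (n - k) * (c ^ k * n.descFactorial k) := by ring
      _ ≤ (c * n - k) * (c * n).descFactorial k :=
          Nat.mul_le_mul step (pow_mul_descFactorial_le_descFactorial_mul c n k)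

theorem pow_mul_choose_le_choose_mul (c n k : ℕ) : c ^ k * n.choose k ≤ (c * n).choose k := by
  have h := pow_mul_descFactorial_le_descFactorial_mul c n k
  rw [descFactorial_eq_factorial_mul_choose, descFactorial_eq_factorial_mul_choose,
    mul_left_comm] at h
  exact Nat.le_of_mul_le_mul_left h k.factorial_pos

end Nat

theorem PMF.toOuterMeasure_uniformOfFinset_powersetCard_subset {α : Type*} {Q B : Finset α}
    (hBQ : B ⊆ Q) (k : ℕ) (hne : (Q.powersetCard k).Nonempty) :
    (uniformOfFinset (Q.powersetCard k) hne).toOuterMeasure {S | S ⊆ B} =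
      (#B).choose k / (#Q).choose k := by
  classical
  have hfilter : {S ∈ Q.powersetCard k | S ∈ {S : Finset α | S ⊆ B}} = B.powersetCard k := by
    ext S
    simp only [mem_filter, mem_powersetCard, Set.mem_ofPred_eq]
    exact ⟨fun ⟨⟨_, hc⟩, hSB⟩ => ⟨hSB, hc⟩, fun ⟨hSB, hc⟩ => ⟨⟨hSB.trans hBQ, hc⟩, hSB⟩⟩
  rw [toOuterMeasure_uniformOfFinset_apply, Finset.filter_congr_decidable, hfilter,
    card_powersetCard, card_powersetCard]

open scoped ENNReal in
theorem bad_sample_probability_general {α : Type*} (f D : ℕ)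
    (Q B : Finset α) (hQ : Q.card = 2 * f + 1) (hBQ : B ⊆ Q) (hB : B.card ≤ f)
    (hne : (Q.powersetCard D).Nonempty) :
    (PMF.uniformOfFinset (Q.powersetCard D) hne).toOuterMeasure
      {S : Finset α | S ⊆ B} ≤ (1 / 2) ^ D := by
  rw [PMF.toOuterMeasure_uniformOfFinset_powersetCard_subset hBQ]
  have hcount : 2 ^ D * (#B).choose D ≤ (#Q).choose D :=
    (Nat.pow_mul_choose_le_choose_mul 2 _ D).trans (Nat.choose_le_choose D (by omega))
  refine ENNReal.div_le_of_le_mul ?_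
  calc ((#B).choose D : ℝ≥0∞) = (1 / 2) ^ D * (2 ^ D * (#B).choose D : ℕ) := by
        push_cast
        rw [← mul_assoc, ← mul_pow, ENNReal.div_mul_cancel (by simp) (by simp), one_pow, one_mul]
    _ ≤ (1 / 2) ^ D * (#Q).choose D := by gcongr

theorem bad_sample_probability {α : Type*} [DecidableEq α] (f D : ℕ)
    (Q B : Finset α) (hQ : Q.card = 2 * f + 1) (hBQ : B ⊆ Q) (hB : B.card ≤ f)
    (hne : (Q.powersetCard D).Nonempty) :
    (PMF.uniformOfFinset (Q.powersetCard D) hne).toOuterMeasure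
      {S : Finset α | S ⊆ B} ≤ (1 / 2) ^ D :=
  bad_sample_probability_general f D Q B hQ hBQ hB hne
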